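/- arXiv:2409.12662 — 2 statements merged into one kernel-verified Lean document; each statement's English description precedes it below -/
import Mathlib

section
/- Let (X_t) be a stationary Gaussian AR(1) process: X_t = φ X_{t-1} + ε_t with |φ| < 1 and ε_t i.i.d. N(0, σ²) independent of the past. Then the autocorrelation function of the process Y_t = X_t² is that of an AR(1) with coefficient φ², i.e. Corr(X_t², X_{t-l}²) = φ^{2l} for all l ≥ 0. -/
/-!
Every combination `a X_t + b X_{t-l}` is centred Gaussian with variance
`v (a² + 2abφ^l + b²)`, where `v = σ²/(1-φ²)`. A centred Gaussian `Z` of variance `s` has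
`E Z² = s` and `E Z⁴ = 3s²` (read off its moment generating function `exp (s t²/2)`), so the
polarization identity `12 x²y² = (x+y)⁴ + (x-y)⁴ - 2x⁴ - 2y⁴` gives
`E[X_t² X_{t-l}²] = v² + 2φ^{2l}v²`. Hence `Cov(X_t², X_{t-l}²) = 2φ^{2l}v²`, while
`Var(X_t²) = 3v² - v² = 2v²`.
-/

open MeasureTheory ProbabilityTheory Real
open scoped NNReal

namespace ProbabilityTheory

section GaussianMoments

variable {v : ℝ≥0}

lemma integrable_pow_gaussianReal (m : ℝ) (n : ℕ) :
    Integrable (fun x : ℝ ↦ x ^ n) (gaussianReal m v) :=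
  integrable_pow_of_mem_interior_integrableExpSet (by simp) n

lemma integral_sq_gaussianReal : ∫ x, x ^ 2 ∂gaussianReal 0 v = v := by
  simpa [variance_eq_integral measurable_id'.aemeasurable] using
    variance_fun_id_gaussianReal (μ := 0) (v := v)

lemma hasDerivAt_mul_exp_mul_sq_div_two (a : ℝ) {p : ℝ → ℝ} {p' t : ℝ}
    (hp : HasDerivAt p p' t) :
    HasDerivAt (fun s ↦ p s * rexp (a * s ^ 2 / 2))
      ((p' + a * t * p t) * rexp (a * t ^ 2 / 2)) t := by
  have he := (((hasDerivAt_pow 2 t).const_mul a).div_const 2).exp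
  exact (hp.mul he).congr_deriv (by push_cast; ring)

lemma integral_pow_four_gaussianReal : ∫ x, x ^ 4 ∂gaussianReal 0 v = 3 * v ^ 2 := by
  set e : ℝ → ℝ := fun t ↦ rexp (v * t ^ 2 / 2)
  have step (p q : ℝ → ℝ) (hp : ∀ t, HasDerivAt p (q t - v * t * p t) t) :
      deriv (fun t ↦ p t * e t) = fun t ↦ q t * e t := by
    funext t
    simpa using (hasDerivAt_mul_exp_mul_sq_div_two (v : ℝ) (hp t)).deriv
  calc ∫ x, x ^ 4 ∂gaussianReal 0 v
      = iteratedDeriv 4 (mgf (fun x ↦ x) (gaussianReal 0 v)) 0 := by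
        rw [iteratedDeriv_mgf_zero] <;> simp
    _ = deriv (deriv (deriv (deriv (fun t ↦ 1 * e t)))) 0 := by
        simp [iteratedDeriv_succ', mgf_fun_id_gaussianReal, e]
    _ = (3 * v ^ 2 + 6 * v ^ 3 * 0 ^ 2 + v ^ 4 * 0 ^ 4) * e 0 := by
        rw [step (fun _ ↦ 1) (fun t ↦ v * t), step _ (fun t ↦ v + v ^ 2 * t ^ 2),
          step _ (fun t ↦ 3 * v ^ 2 * t + v ^ 3 * t ^ 3),
          step _ (fun t ↦ 3 * v ^ 2 + 6 * v ^ 3 * t ^ 2 + v ^ 4 * t ^ 4)] <;> intro t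
        · exact (((hasDerivAt_id t).const_mul _).add
            ((hasDerivAt_pow 3 t).const_mul _)).congr_deriv (by push_cast; ring)
        · exact (((hasDerivAt_pow 2 t).const_mul _).const_add _).congr_deriv (by push_cast; ring)
        · exact ((hasDerivAt_id t).const_mul _).congr_deriv (by ring)
        · exact (hasDerivAt_const t 1).congr_deriv (by ring)
    _ = 3 * v ^ 2 := by simp [e]

end GaussianMoments

section GaussianPair

variable {Ω : Type*} [MeasurableSpace Ω] {μ : Measure Ω} {v : ℝ≥0}

lemma HasLaw.integrable_pow_gaussianReal {W : Ω → ℝ} {m : ℝ}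
    (hW : HasLaw W (gaussianReal m v) μ) (n : ℕ) : Integrable (fun ω ↦ W ω ^ n) μ := by
  have h := ProbabilityTheory.integrable_pow_gaussianReal (v := v) m n
  rw [← hW.map_eq] at h
  exact (integrable_map_measure (g := fun x : ℝ ↦ x ^ n) (by fun_prop) hW.aemeasurable).mp h

lemma HasLaw.integral_sq_gaussianReal {W : Ω → ℝ} (hW : HasLaw W (gaussianReal 0 v) μ) :
    ∫ ω, W ω ^ 2 ∂μ = v :=
  (hW.integral_comp (f := fun x ↦ x ^ 2) (by fun_prop)).trans
    ProbabilityTheory.integral_sq_gaussianReal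

lemma HasLaw.integral_pow_four_gaussianReal {W : Ω → ℝ} (hW : HasLaw W (gaussianReal 0 v) μ) :
    ∫ ω, W ω ^ 4 ∂μ = 3 * v ^ 2 :=
  (hW.integral_comp (f := fun x ↦ x ^ 4) (by fun_prop)).trans
    ProbabilityTheory.integral_pow_four_gaussianReal

variable {U V : Ω → ℝ} {su sv c : ℝ}

lemma integral_sq_mul_sq_of_hasLaw_gaussianReal
    (hq : ∀ a b : ℝ, 0 ≤ a ^ 2 * su + 2 * a * b * c + b ^ 2 * sv)
    (h : ∀ a b : ℝ, HasLaw (fun ω ↦ a * U ω + b * V ω)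
      (gaussianReal 0 (a ^ 2 * su + 2 * a * b * c + b ^ 2 * sv).toNNReal) μ) :
    ∫ ω, U ω ^ 2 * V ω ^ 2 ∂μ = su * sv + 2 * c ^ 2 := by
  have fourth (a b : ℝ) : ∫ ω, (a * U ω + b * V ω) ^ 4 ∂μ
      = 3 * (a ^ 2 * su + 2 * a * b * c + b ^ 2 * sv) ^ 2 := by
    rw [(h a b).integral_pow_four_gaussianReal, Real.coe_toNNReal _ (hq a b)]
  have int (a b : ℝ) := (h a b).integrable_pow_gaussianReal 4
  have polarization : (fun ω ↦ U ω ^ 2 * V ω ^ 2) = fun ω ↦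
      ((1 * U ω + 1 * V ω) ^ 4 + (1 * U ω + -1 * V ω) ^ 4
        - 2 * (1 * U ω + 0 * V ω) ^ 4 - 2 * (0 * U ω + 1 * V ω) ^ 4) / 12 := by
    funext ω; ring
  rw [polarization, integral_div]
  simp (disch := fun_prop) only [integral_sub, integral_add, integral_const_mul, fourth]
  ring

end GaussianPair

end ProbabilityTheory

theorem stmt7_general {Ω : Type*} [MeasurableSpace Ω] (μ : Measure Ω)
    (X : ℤ → Ω → ℝ) (φ σ : ℝ) (hφ : |φ| < 1) (hσ : 0 < σ)
    (hgauss : ∀ (t : ℤ) (l : ℕ) (a b : ℝ),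
      Measure.map (fun ω => a * X t ω + b * X (t - l) ω) μ =
        gaussianReal 0
          (((a ^ 2 + b ^ 2) * σ ^ 2 / (1 - φ ^ 2) +
              2 * a * b * φ ^ l * σ ^ 2 / (1 - φ ^ 2)).toNNReal)) :
    ∀ (t : ℤ) (l : ℕ),
      ((∫ ω, (X t ω) ^ 2 * (X (t - l) ω) ^ 2 ∂μ) -
          (∫ ω, (X t ω) ^ 2 ∂μ) * (∫ ω, (X (t - l) ω) ^ 2 ∂μ)) /
        (Real.sqrt ((∫ ω, (X t ω) ^ 4 ∂μ) - (∫ ω, (X t ω) ^ 2 ∂μ) ^ 2) *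
          Real.sqrt ((∫ ω, (X (t - l) ω) ^ 4 ∂μ) - (∫ ω, (X (t - l) ω) ^ 2 ∂μ) ^ 2)) =
      φ ^ (2 * l) := by
  intro t l
  set v := σ ^ 2 / (1 - φ ^ 2)
  set c := φ ^ l
  have hφ2 : φ ^ 2 < 1 := (sq_lt_one_iff_abs_lt_one φ).2 hφ
  have hv : 0 < v := div_pos (by positivity) (sub_pos.2 hφ2)
  have hc : c ^ 2 ≤ 1 := by
    rw [← pow_mul, pow_mul']
    exact pow_le_one₀ (sq_nonneg φ) hφ2.le
  have hq (a b : ℝ) : 0 ≤ a ^ 2 * v + 2 * a * b * (c * v) + b ^ 2 * v := by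
    nlinarith [sq_nonneg (a + c * b), mul_nonneg (sub_nonneg.2 hc) (sq_nonneg b)]
  have hlaw (a b : ℝ) : HasLaw (fun ω ↦ a * X t ω + b * X (t - l) ω)
      (gaussianReal 0 (a ^ 2 * v + 2 * a * b * (c * v) + b ^ 2 * v).toNNReal) μ :=
    ⟨.of_map_ne_zero (by rw [hgauss]; exact IsProbabilityMeasure.ne_zero _),
      by rw [hgauss]; congr 2; ring⟩
  have hU : HasLaw (X t) (gaussianReal 0 v.toNNReal) μ := by simpa using hlaw 1 0
  have hV : HasLaw (X (t - l)) (gaussianReal 0 v.toNNReal) μ := by simpa using hlaw 0 1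
  rw [integral_sq_mul_sq_of_hasLaw_gaussianReal hq hlaw, hU.integral_sq_gaussianReal,
    hV.integral_sq_gaussianReal, hU.integral_pow_four_gaussianReal,
    hV.integral_pow_four_gaussianReal, Real.coe_toNNReal _ hv.le]
  have hsqrt : √(3 * v ^ 2 - v ^ 2) * √(3 * v ^ 2 - v ^ 2) = 2 * v ^ 2 := by
    rw [Real.mul_self_sqrt (by nlinarith)]; ring
  rw [hsqrt, pow_mul]
  field_simp
  ring

/-- for a zero-mean stationary Gaussian AR(1) process `X` with coefficient
`|φ| < 1` and innovation variance `σ² > 0` (so that every pair `(X_t, X_{t-l})` is jointly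
Gaussian with `Var(X_t) = σ²/(1-φ²)` and `Cov(X_t, X_{t-l}) = φ^l σ²/(1-φ²)`), the
correlation of the squared process satisfies `Corr(X_t², X_{t-l}²) = φ^{2l}`, i.e. the
autocorrelation function of `X²` is that of an AR(1) with coefficient `φ²`. -/
theorem stmt7 {Ω : Type*} [MeasurableSpace Ω] (μ : Measure Ω) [IsProbabilityMeasure μ]
    (X : ℤ → Ω → ℝ) (φ σ : ℝ) (hφ : |φ| < 1) (hσ : 0 < σ)
    (hmeas : ∀ t, Measurable (X t))
    (hgauss : ∀ (t : ℤ) (l : ℕ) (a b : ℝ),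
      Measure.map (fun ω => a * X t ω + b * X (t - l) ω) μ =
        gaussianReal 0
          (((a ^ 2 + b ^ 2) * σ ^ 2 / (1 - φ ^ 2) +
              2 * a * b * φ ^ l * σ ^ 2 / (1 - φ ^ 2)).toNNReal)) :
    ∀ (t : ℤ) (l : ℕ),
      ((∫ ω, (X t ω) ^ 2 * (X (t - l) ω) ^ 2 ∂μ) -
          (∫ ω, (X t ω) ^ 2 ∂μ) * (∫ ω, (X (t - l) ω) ^ 2 ∂μ)) /
        (Real.sqrt ((∫ ω, (X t ω) ^ 4 ∂μ) - (∫ ω, (X t ω) ^ 2 ∂μ) ^ 2) *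
          Real.sqrt ((∫ ω, (X (t - l) ω) ^ 4 ∂μ) - (∫ ω, (X (t - l) ω) ^ 2 ∂μ) ^ 2)) =
      φ ^ (2 * l) :=
  stmt7_general μ X φ σ hφ hσ hgauss
end

section
/- For a unit-root process y_t = y_{t-1} + u_t with y_0 = O_p(1) and (u_t) mean-zero uncorrelated with variance σ_u², the periodogram I(λ_j) = |w_y(λ_j)|² at Fourier frequency λ_j = 2πj/T satisfies E^{1/2}|w_u(λ_j)|² = O(1), E|y_T| = O(T^{1/2}), |1 - e^{iλ_j}|^{-2} ≤ C λ_j^{-2}, and hence I(λ_j) = O_p(j^{-2} T²). -/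
/-!
By Abel summation, `(1 - e^{iλ}) Σ_t y_t e^{iλt} = Σ_t u_t e^{iλt} + e^{iλ} y_0 - e^{iλ(T+1)} y_T`.
At a Fourier frequency `e^{iλT} = 1`, so the boundary terms collapse to `-e^{iλ} (y_T - y_0)`
and the right side becomes `Σ_t u_t (e^{iλt} - e^{iλ})`, a linear form in uncorrelated noise whose
second moment is at most `4 T σ_u²`. Dividing by `2πT |1 - e^{iλ}|²` and using Jordan's inequality
`|1 - e^{iλ}| = 2 sin(λ/2) ≥ 2λ/π` gives `E I(λ_j) ≤ σ_u² T² / (8π j²)`; in particular `y_0` drops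
out. The bound on `E|y_T|` comes from `y_T = y_0 + Σ_t u_t` and `E (Σ_t u_t)² = T σ_u²`.
-/

open MeasureTheory Complex Real

theorem sum_Icc_eq_sub_of_succ {M : Type*} [AddCommGroup M] {y u : ℕ → M}
    (hrec : ∀ t, y (t + 1) = y t + u (t + 1)) (T : ℕ) :
    ∑ t ∈ Finset.Icc 1 T, u t = y T - y 0 := by
  induction T with
  | zero => simp
  | succ T ih =>
    rw [Finset.sum_Icc_succ_top (Nat.le_add_left 1 T), ih, hrec]
    abel

theorem one_sub_mul_sum_Icc_mul_pow {R : Type*} [CommRing R] {y u : ℕ → R}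
    (hrec : ∀ t, y (t + 1) = y t + u (t + 1)) (z : R) (T : ℕ) :
    (1 - z) * ∑ t ∈ Finset.Icc 1 T, y t * z ^ t
      = ∑ t ∈ Finset.Icc 1 T, u t * z ^ t + z * y 0 - z ^ (T + 1) * y T := by
  induction T with
  | zero => simp
  | succ T ih =>
    rw [Finset.sum_Icc_succ_top (Nat.le_add_left 1 T),
      Finset.sum_Icc_succ_top (Nat.le_add_left 1 T), hrec]
    linear_combination ih

theorem one_sub_mul_sum_Icc_mul_pow_of_pow_eq_one {R : Type*} [CommRing R] {y u : ℕ → R}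
    (hrec : ∀ t, y (t + 1) = y t + u (t + 1)) {z : R} {T : ℕ} (hz : z ^ T = 1) :
    (1 - z) * ∑ t ∈ Finset.Icc 1 T, y t * z ^ t = ∑ t ∈ Finset.Icc 1 T, u t * (z ^ t - z) := by
  simp only [one_sub_mul_sum_Icc_mul_pow hrec, pow_succ, hz, one_mul, mul_sub,
    Finset.sum_sub_distrib, ← Finset.sum_mul, sum_Icc_eq_sub_of_succ hrec]
  ring

theorem sq_sum_mul_eq_sum_sum {R ι : Type*} [CommSemiring R] (s : Finset ι) (a x : ι → R) :
    (∑ t ∈ s, a t * x t) ^ 2 = ∑ p ∈ s, ∑ q ∈ s, a p * a q * (x p * x q) := by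
  rw [sq, Finset.sum_mul_sum]
  exact Finset.sum_congr rfl fun p _ => Finset.sum_congr rfl fun q _ => by ring

theorem two_div_pi_mul_le_norm_one_sub_exp {θ : ℝ} (h0 : 0 ≤ θ) (hπ : θ ≤ π) :
    2 / π * θ ≤ ‖1 - Complex.exp (I * θ)‖ := by
  have hsin : 2 / π * (θ / 2) ≤ Real.sin (θ / 2) := Real.mul_le_sin (by positivity) (by linarith)
  have hsin0 : 0 ≤ Real.sin (θ / 2) :=
    Real.sin_nonneg_of_nonneg_of_le_pi (by positivity) (by linarith)
  rw [norm_sub_rev, norm_exp_I_mul_ofReal_sub_one, Real.norm_eq_abs, abs_of_nonneg (by positivity)]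
  linarith

theorem inv_norm_one_sub_exp_sq_le {θ : ℝ} (h0 : 0 < θ) (hπ : θ ≤ π) :
    (‖1 - Complex.exp (I * θ)‖ ^ 2)⁻¹ ≤ π ^ 2 / 4 * (θ ^ 2)⁻¹ :=
  calc (‖1 - Complex.exp (I * θ)‖ ^ 2)⁻¹ ≤ ((2 / π * θ) ^ 2)⁻¹ :=
        inv_anti₀ (by positivity)
          (pow_le_pow_left₀ (by positivity) (two_div_pi_mul_le_norm_one_sub_exp h0.le hπ) 2)
    _ = π ^ 2 / 4 * (θ ^ 2)⁻¹ := by field_simp; ring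

theorem two_pi_mul_div_mem_Ioc {j T : ℕ} (hj : 1 ≤ j) (hjT : 2 * j ≤ T) :
    (2 * π * j / T : ℝ) ∈ Set.Ioc 0 π := by
  have hj' : (1 : ℝ) ≤ j := by exact_mod_cast hj
  have hjT' : 2 * (j : ℝ) ≤ T := by exact_mod_cast hjT
  have hT' : (0 : ℝ) < T := by linarith
  refine ⟨by positivity, ?_⟩
  rw [div_le_iff₀ hT']
  nlinarith [Real.pi_pos]

theorem exp_two_pi_mul_div_pow_eq_one {T : ℕ} (hT : T ≠ 0) (j : ℕ) :
    Complex.exp (I * (2 * π * j / T : ℝ)) ^ T = 1 := by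
  rw [← Complex.exp_nat_mul, ← Complex.exp_nat_mul_two_pi_mul_I j]
  congr 1
  push_cast
  field_simp

/-- The discrete Fourier transform `w_x(θ)` of `x_1, …, x_T`. -/
noncomputable def dft (T : ℕ) (θ : ℝ) (x : ℕ → ℝ) : ℂ :=
  (1 / (Real.sqrt (2 * π * T) : ℂ)) * ∑ t ∈ Finset.Icc 1 T, (x t : ℂ) * Complex.exp (I * θ * t)

theorem norm_dft_sq (T : ℕ) (θ : ℝ) (x : ℕ → ℝ) :
    ‖dft T θ x‖ ^ 2
      = ‖∑ t ∈ Finset.Icc 1 T, (x t : ℂ) * Complex.exp (I * θ) ^ t‖ ^ 2 / (2 * π * T) := by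
  have hpow : ∀ t : ℕ, Complex.exp (I * θ * t) = Complex.exp (I * θ) ^ t := fun t => by
    rw [← Complex.exp_nat_mul, mul_comm]
  rw [dft, norm_mul, mul_pow, norm_div, norm_one, Complex.norm_real, Real.norm_eq_abs,
    abs_of_nonneg (Real.sqrt_nonneg _), div_pow, Real.sq_sqrt (by positivity)]
  simp only [hpow]
  ring

section Moments

variable {Ω : Type*} [MeasurableSpace Ω] {μ : Measure Ω}

/-- No measurability of `f` is needed: `f ≤ (g / a + a) / 2` pointwise for every `a > 0`, and an
integrable majorant bounds the integral of a nonnegative function. -/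
theorem integral_le_sqrt_of_sq_le [IsProbabilityMeasure μ] {f g : Ω → ℝ} {B : ℝ}
    (hg : Integrable g μ) (hgB : ∫ ω, g ω ∂μ ≤ B) (hf : ∀ ω, 0 ≤ f ω)
    (hfg : ∀ ω, f ω ^ 2 ≤ g ω) : ∫ ω, f ω ∂μ ≤ √B := by
  have amgm : ∀ a > 0, ∫ ω, f ω ∂μ ≤ (B / a + a) / 2 := by
    intro a ha
    have hpt : ∀ ω, f ω ≤ (g ω / a + a) / 2 := by
      intro ω
      rw [div_add' _ _ _ ha.ne', div_div, le_div_iff₀ (by positivity)]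
      nlinarith [sq_nonneg (f ω - a), hfg ω]
    calc ∫ ω, f ω ∂μ ≤ ∫ ω, (g ω / a + a) / 2 ∂μ :=
          integral_mono_of_nonneg (ae_of_all _ hf)
            (((hg.div_const a).add (integrable_const a)).div_const 2) (ae_of_all _ hpt)
      _ = ((∫ ω, g ω ∂μ) / a + a) / 2 := by
          rw [integral_div, integral_add (hg.div_const a) (integrable_const a), integral_div,
            integral_const, probReal_univ, one_smul]
      _ ≤ (B / a + a) / 2 := by gcongr
  have hB : 0 ≤ B := hgB.trans' (integral_nonneg fun ω => (sq_nonneg _).trans (hfg ω))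
  rcases hB.eq_or_lt with rfl | hB
  · refine le_of_forall_pos_le_add fun ε hε => ?_
    simpa using amgm (2 * ε) (by positivity)
  · simpa [Real.div_sqrt] using amgm √B (Real.sqrt_pos.mpr hB)

variable {u y : ℕ → Ω → ℝ} {σu : ℝ}

theorem integrable_sq_sum_mul (hint : ∀ s t, Integrable (fun ω => u s ω * u t ω) μ)
    (s : Finset ℕ) (a : ℕ → ℝ) : Integrable (fun ω => (∑ t ∈ s, a t * u t ω) ^ 2) μ := by
  simp_rw [sq_sum_mul_eq_sum_sum]
  exact integrable_finsetSum _ fun p _ => integrable_finsetSum _ fun q _ =>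
    (hint p q).const_mul _

theorem integral_sq_sum_mul (hint : ∀ s t, Integrable (fun ω => u s ω * u t ω) μ)
    (hvar : ∀ t, ∫ ω, u t ω ^ 2 ∂μ = σu ^ 2)
    (huncorr : ∀ s t, s ≠ t → ∫ ω, u s ω * u t ω ∂μ = 0) (s : Finset ℕ) (a : ℕ → ℝ) :
    ∫ ω, (∑ t ∈ s, a t * u t ω) ^ 2 ∂μ = σu ^ 2 * ∑ t ∈ s, a t ^ 2 := by
  simp_rw [sq_sum_mul_eq_sum_sum]
  rw [integral_finsetSum _ fun p _ => integrable_finsetSum _ fun q _ => (hint p q).const_mul _,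
    Finset.mul_sum]
  refine Finset.sum_congr rfl fun p hp => ?_
  rw [integral_finsetSum _ fun q _ => (hint p q).const_mul _,
    Finset.sum_eq_single_of_mem p hp fun q _ hqp => by
      rw [integral_const_mul, huncorr p q (Ne.symm hqp), mul_zero],
    integral_const_mul]
  simp only [← sq, hvar, mul_comm]

theorem integral_norm_sum_mul_sq (hint : ∀ s t, Integrable (fun ω => u s ω * u t ω) μ)
    (hvar : ∀ t, ∫ ω, u t ω ^ 2 ∂μ = σu ^ 2)
    (huncorr : ∀ s t, s ≠ t → ∫ ω, u s ω * u t ω ∂μ = 0) (s : Finset ℕ) (c : ℕ → ℂ) :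
    ∫ ω, ‖∑ t ∈ s, (u t ω : ℂ) * c t‖ ^ 2 ∂μ = σu ^ 2 * ∑ t ∈ s, ‖c t‖ ^ 2 := by
  have hsplit : ∀ ω, ‖∑ t ∈ s, (u t ω : ℂ) * c t‖ ^ 2
      = (∑ t ∈ s, (c t).re * u t ω) ^ 2 + (∑ t ∈ s, (c t).im * u t ω) ^ 2 := by
    intro ω
    rw [Complex.sq_norm, Complex.normSq_apply, Complex.re_sum, Complex.im_sum]
    simp only [Complex.re_ofReal_mul, Complex.im_ofReal_mul, mul_comm (u _ ω), sq]
  simp_rw [hsplit]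
  rw [integral_add (integrable_sq_sum_mul hint s _) (integrable_sq_sum_mul hint s _),
    integral_sq_sum_mul hint hvar huncorr, integral_sq_sum_mul hint hvar huncorr, ← mul_add,
    ← Finset.sum_add_distrib]
  simp only [Complex.sq_norm, Complex.normSq_apply, ← sq]

theorem integral_norm_dft_sq (hint : ∀ s t, Integrable (fun ω => u s ω * u t ω) μ)
    (hvar : ∀ t, ∫ ω, u t ω ^ 2 ∂μ = σu ^ 2)
    (huncorr : ∀ s t, s ≠ t → ∫ ω, u s ω * u t ω ∂μ = 0) {T : ℕ} (hT : T ≠ 0) (θ : ℝ) :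
    ∫ ω, ‖dft T θ (u · ω)‖ ^ 2 ∂μ = σu ^ 2 / (2 * π) := by
  simp_rw [norm_dft_sq]
  rw [integral_div, integral_norm_sum_mul_sq hint hvar huncorr]
  simp only [norm_pow, Complex.norm_exp_I_mul_ofReal, one_pow, Finset.sum_const, Nat.card_Icc,
    add_tsub_cancel_right, nsmul_eq_mul, mul_one]
  field_simp

theorem norm_one_sub_exp_sq_mul_integral_norm_dft_sq_le
    (hint : ∀ s t, Integrable (fun ω => u s ω * u t ω) μ)
    (hvar : ∀ t, ∫ ω, u t ω ^ 2 ∂μ = σu ^ 2)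
    (huncorr : ∀ s t, s ≠ t → ∫ ω, u s ω * u t ω ∂μ = 0)
    (hrec : ∀ t ω, y (t + 1) ω = y t ω + u (t + 1) ω) {T : ℕ} (hT : T ≠ 0) {θ : ℝ}
    (hθ : Complex.exp (I * θ) ^ T = 1) :
    ‖1 - Complex.exp (I * θ)‖ ^ 2 * ∫ ω, ‖dft T θ (y · ω)‖ ^ 2 ∂μ ≤ σu ^ 2 * 2 / π := by
  set z := Complex.exp (I * θ)
  have hz : ‖z‖ = 1 := Complex.norm_exp_I_mul_ofReal θ
  have habel : ∀ ω, ‖1 - z‖ ^ 2 * ‖∑ t ∈ Finset.Icc 1 T, (y t ω : ℂ) * z ^ t‖ ^ 2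
      = ‖∑ t ∈ Finset.Icc 1 T, (u t ω : ℂ) * (z ^ t - z)‖ ^ 2 := fun ω => by
    rw [← mul_pow, ← norm_mul, one_sub_mul_sum_Icc_mul_pow_of_pow_eq_one
      (u := fun t => (u t ω : ℂ)) (fun t => by rw [hrec]; push_cast; rfl) hθ]
  have hdiff : ∀ t, ‖z ^ t - z‖ ^ 2 ≤ 4 := fun t => by
    have : ‖z ^ t - z‖ ≤ 2 := (norm_sub_le _ _).trans (by rw [norm_pow, hz, one_pow]; norm_num)
    nlinarith [norm_nonneg (z ^ t - z)]
  calc ‖1 - z‖ ^ 2 * ∫ ω, ‖dft T θ (y · ω)‖ ^ 2 ∂μ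
      = (∫ ω, ‖∑ t ∈ Finset.Icc 1 T, (u t ω : ℂ) * (z ^ t - z)‖ ^ 2 ∂μ) / (2 * π * T) := by
        simp_rw [norm_dft_sq, integral_div, ← habel, integral_const_mul]
        ring
    _ = σu ^ 2 * (∑ t ∈ Finset.Icc 1 T, ‖z ^ t - z‖ ^ 2) / (2 * π * T) := by
        rw [integral_norm_sum_mul_sq hint hvar huncorr]
    _ ≤ σu ^ 2 * (4 * T) / (2 * π * T) := by
        gcongr
        simpa [mul_comm] using Finset.sum_le_card_nsmul (Finset.Icc 1 T) _ _ fun t _ => hdiff t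
    _ = σu ^ 2 * 2 / π := by field_simp; ring

theorem integral_norm_dft_sq_le_of_two_mul_le
    (hint : ∀ s t, Integrable (fun ω => u s ω * u t ω) μ)
    (hvar : ∀ t, ∫ ω, u t ω ^ 2 ∂μ = σu ^ 2)
    (huncorr : ∀ s t, s ≠ t → ∫ ω, u s ω * u t ω ∂μ = 0)
    (hrec : ∀ t ω, y (t + 1) ω = y t ω + u (t + 1) ω) {T j : ℕ} (hj : 1 ≤ j) (hjT : 2 * j ≤ T) :
    ∫ ω, ‖dft T (2 * π * j / T) (y · ω)‖ ^ 2 ∂μ ≤ σu ^ 2 / (8 * π) * T ^ 2 / j ^ 2 := by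
  have hT : T ≠ 0 := by omega
  obtain ⟨hθ0, hθπ⟩ := two_pi_mul_div_mem_Ioc hj hjT
  have hD : 0 < ‖1 - Complex.exp (I * (2 * π * j / T : ℝ))‖ ^ 2 :=
    pow_pos ((mul_pos (by positivity) hθ0).trans_le
      (two_div_pi_mul_le_norm_one_sub_exp hθ0.le hθπ)) 2
  calc ∫ ω, ‖dft T (2 * π * j / T) (y · ω)‖ ^ 2 ∂μ
      ≤ σu ^ 2 * 2 / π * (‖1 - Complex.exp (I * (2 * π * j / T : ℝ))‖ ^ 2)⁻¹ := by
        rw [← div_eq_mul_inv, le_div_iff₀' hD]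
        exact norm_one_sub_exp_sq_mul_integral_norm_dft_sq_le hint hvar huncorr hrec hT
          (exp_two_pi_mul_div_pow_eq_one hT j)
    _ ≤ σu ^ 2 * 2 / π * (π ^ 2 / 4 * ((2 * π * j / T : ℝ) ^ 2)⁻¹) := by
        gcongr
        exact inv_norm_one_sub_exp_sq_le hθ0 hθπ
    _ = σu ^ 2 / (8 * π) * T ^ 2 / j ^ 2 := by field_simp; ring

theorem integral_abs_le_sqrt [IsProbabilityMeasure μ]
    (hint : ∀ s t, Integrable (fun ω => u s ω * u t ω) μ)
    (hvar : ∀ t, ∫ ω, u t ω ^ 2 ∂μ = σu ^ 2)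
    (huncorr : ∀ s t, s ≠ t → ∫ ω, u s ω * u t ω ∂μ = 0) {C0 : ℝ}
    (hy0int : Integrable (fun ω => y 0 ω ^ 2) μ) (hy0 : ∫ ω, y 0 ω ^ 2 ∂μ ≤ C0)
    (hrec : ∀ t ω, y (t + 1) ω = y t ω + u (t + 1) ω) (T : ℕ) :
    ∫ ω, |y T ω| ∂μ ≤ √(2 * C0 + 2 * T * σu ^ 2) := by
  set S := fun ω => ∑ t ∈ Finset.Icc 1 T, u t ω
  have hS : Integrable (fun ω => S ω ^ 2) μ := by
    simpa using integrable_sq_sum_mul hint (Finset.Icc 1 T) fun _ => 1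
  have hS2 : ∫ ω, S ω ^ 2 ∂μ = T * σu ^ 2 := by
    simpa [mul_comm] using integral_sq_sum_mul hint hvar huncorr (Finset.Icc 1 T) fun _ => 1
  have hyT : ∀ ω, y T ω = y 0 ω + S ω := fun ω => by
    rw [show S ω = y T ω - y 0 ω from
      sum_Icc_eq_sub_of_succ (y := (y · ω)) (u := (u · ω)) (hrec · ω) T]
    ring
  refine integral_le_sqrt_of_sq_le (g := fun ω => 2 * y 0 ω ^ 2 + 2 * S ω ^ 2)
    ((hy0int.const_mul 2).add (hS.const_mul 2)) ?_
    (fun ω => abs_nonneg _) fun ω => ?_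
  · rw [integral_add (hy0int.const_mul 2) (hS.const_mul 2), integral_const_mul,
      integral_const_mul, hS2]
    linarith
  · rw [sq_abs, hyT]
    nlinarith [sq_nonneg (y 0 ω - S ω)]

end Moments

theorem stmt12_general {Ω : Type*} [MeasurableSpace Ω] (μ : Measure Ω) [IsProbabilityMeasure μ]
    (u y : ℕ → Ω → ℝ) (σu C0 : ℝ)
    (hint : ∀ s t, Integrable (fun ω => u s ω * u t ω) μ)
    (hvar : ∀ t, ∫ ω, (u t ω) ^ 2 ∂μ = σu ^ 2)
    (huncorr : ∀ s t, s ≠ t → ∫ ω, u s ω * u t ω ∂μ = 0)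
    (hy0int : Integrable (fun ω => (y 0 ω) ^ 2) μ)
    (hy0 : ∫ ω, (y 0 ω) ^ 2 ∂μ ≤ C0)
    (hrec : ∀ t ω, y (t + 1) ω = y t ω + u (t + 1) ω) :
    ∃ C : ℝ, ∀ T j : ℕ, 1 ≤ j → 2 * j ≤ T →
      (∫ ω, (‖((1 / (Real.sqrt (2 * π * T) : ℂ)) *
            ∑ t ∈ Finset.Icc 1 T,
              (u t ω : ℂ) * Complex.exp (Complex.I * (2 * π * j / T : ℝ) * t))‖) ^ 2 ∂μ ≤ C) ∧
      (∫ ω, |y T ω| ∂μ ≤ C * Real.sqrt T) ∧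
      ((‖(1 - Complex.exp (Complex.I * (2 * π * j / T : ℝ)))‖) ^ 2)⁻¹ ≤
          C * (((2 * π * j / T : ℝ)) ^ 2)⁻¹ ∧
      (∫ ω, (‖((1 / (Real.sqrt (2 * π * T) : ℂ)) *
            ∑ t ∈ Finset.Icc 1 T,
              (y t ω : ℂ) * Complex.exp (Complex.I * (2 * π * j / T : ℝ) * t))‖) ^ 2 ∂μ ≤
          C * (T : ℝ) ^ 2 / (j : ℝ) ^ 2) := by
  have hC0 : 0 ≤ C0 := (integral_nonneg fun ω => sq_nonneg _).trans hy0
  have hπ : 3 < π := Real.pi_gt_three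
  set C := 2 * C0 + 2 * σu ^ 2 + π ^ 2
  have hσC : σu ^ 2 ≤ C := by nlinarith
  have hC : 2 * C0 + 2 * σu ^ 2 + 1 ≤ C := by nlinarith
  refine ⟨C, fun T j hj hjT => ⟨?_, ?_, ?_, ?_⟩⟩
  · refine (integral_norm_dft_sq hint hvar huncorr (T := T) (by omega) (2 * π * j / T)).trans_le ?_
    exact (div_le_self (sq_nonneg σu) (by linarith)).trans hσC
  · have hT : (1 : ℝ) ≤ T := by exact_mod_cast (by omega : 1 ≤ T)
    refine (integral_abs_le_sqrt hint hvar huncorr hy0int hy0 hrec T).trans ?_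
    rw [← Real.sqrt_sq (by positivity : 0 ≤ C), ← Real.sqrt_mul (sq_nonneg C)]
    refine Real.sqrt_le_sqrt ?_
    calc 2 * C0 + 2 * T * σu ^ 2 ≤ (2 * C0 + 2 * σu ^ 2) * T := by nlinarith
      _ ≤ C * T := by gcongr; linarith
      _ ≤ C ^ 2 * T := by gcongr; nlinarith
  · obtain ⟨hθ0, hθπ⟩ := two_pi_mul_div_mem_Ioc hj hjT
    exact (inv_norm_one_sub_exp_sq_le hθ0 hθπ).trans (by gcongr; nlinarith)
  · refine (integral_norm_dft_sq_le_of_two_mul_le hint hvar huncorr hrec hj hjT).trans ?_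
    gcongr
    exact (div_le_self (sq_nonneg σu) (by linarith)).trans hσC

/-- for a unit-root process `y_t = y_{t-1} + u_t` with `y_0` bounded in `L²`
and mean-zero uncorrelated noise of variance `σ_u²`, there is a constant `C` such that at
each Fourier frequency `λ_j = 2πj/T` with `1 ≤ j ≤ T/2`: `E|w_u(λ_j)|² ≤ C` (so
`E^{1/2}|w_u(λ_j)|² = O(1)`), `E|y_T| ≤ C √T` (so `E|y_T| = O(T^{1/2})`),
`|1 - e^{iλ_j}|⁻² ≤ C λ_j⁻²`, and the periodogram satisfies `E I(λ_j) ≤ C j⁻² T²`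
(hence `I(λ_j) = O_p(j^{-2} T²)`). -/
theorem stmt12 {Ω : Type*} [MeasurableSpace Ω] (μ : Measure Ω) [IsProbabilityMeasure μ]
    (u y : ℕ → Ω → ℝ) (σu C0 : ℝ)
    (hmeasu : ∀ t, Measurable (u t)) (hmeasy : ∀ t, Measurable (y t))
    (hint : ∀ s t, Integrable (fun ω => u s ω * u t ω) μ)
    (hmean : ∀ t, ∫ ω, u t ω ∂μ = 0)
    (hvar : ∀ t, ∫ ω, (u t ω) ^ 2 ∂μ = σu ^ 2)
    (huncorr : ∀ s t, s ≠ t → ∫ ω, u s ω * u t ω ∂μ = 0)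
    (hy0int : Integrable (fun ω => (y 0 ω) ^ 2) μ)
    (hy0 : ∫ ω, (y 0 ω) ^ 2 ∂μ ≤ C0)
    (hy0u : ∀ t, Integrable (fun ω => y 0 ω * u t ω) μ)
    (hrec : ∀ t ω, y (t + 1) ω = y t ω + u (t + 1) ω) :
    ∃ C : ℝ, ∀ T j : ℕ, 1 ≤ j → 2 * j ≤ T →
      (∫ ω, (‖((1 / (Real.sqrt (2 * π * T) : ℂ)) *
            ∑ t ∈ Finset.Icc 1 T,
              (u t ω : ℂ) * Complex.exp (Complex.I * (2 * π * j / T : ℝ) * t))‖) ^ 2 ∂μ ≤ C) ∧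
      (∫ ω, |y T ω| ∂μ ≤ C * Real.sqrt T) ∧
      ((‖(1 - Complex.exp (Complex.I * (2 * π * j / T : ℝ)))‖) ^ 2)⁻¹ ≤
          C * (((2 * π * j / T : ℝ)) ^ 2)⁻¹ ∧
      (∫ ω, (‖((1 / (Real.sqrt (2 * π * T) : ℂ)) *
            ∑ t ∈ Finset.Icc 1 T,
              (y t ω : ℂ) * Complex.exp (Complex.I * (2 * π * j / T : ℝ) * t))‖) ^ 2 ∂μ ≤
          C * (T : ℝ) ^ 2 / (j : ℝ) ^ 2) :=
  stmt12_general μ u y σu C0 hint hvar huncorr hy0int hy0 hrec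
end
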